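/- Let γ > 1 and consider the 1D compressible Euler equations with conservative state U = (ρ, m, E), pressure p(U) = (γ−1)(E − m²/(2ρ)), sound speed c(U) = √(γ p(U)/ρ), velocity v(U) = m/ρ, flux F(U) = (m, m²/ρ + p(U), v(U)(E + p(U))), and invariant domain G = {U : ρ > 0, p(U) > 0}. Let F̂(A, B) = (F(A) + F(B))/2 − (α/2)(B − A) be the local Lax–Friedrichs flux. Then for all U₁, U₂, U₃ ∈ G, all α ≥ max{|v(U₁)| + c(U₁), |v(U₂)| + c(U₂), |v(U₃)| + c(U₃)}, and all μ ≥ 0 with μ·α ≤ 1, one has U₂ − μ·(F̂(U₂, U₃) − F̂(U₁, U₂)) ∈ G. -/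

import Mathlib

/-!
For `α > 0` the update equals the convex combination
`(1 - μα) U₂ + (μα/2) (U₁ + α⁻¹ F(U₁)) + (μα/2) (U₃ - α⁻¹ F(U₃))`.
For `γ > 1` the domain is `{ρ > 0, m² < 2ρE}`, which is convex, and it contains
`U + t F(U)` whenever `|t| (|v| + c) ≤ 1`: writing `w = 1 + tv`, the quantity `2ρE - m²` of
the new state is `w² (2ρE - m²) - t²p² = (2ρp w² - (γ - 1) t²p²) / (γ - 1)`,
and `w² ≥ t²c² = t²γp/ρ`.
-/

/-- Pressure of a 1D Euler state `U = (ρ, m, E)`: `p = (γ−1)(E − m²/(2ρ))`. -/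
noncomputable def eulerPressure (γ : ℝ) (U : ℝ × ℝ × ℝ) : ℝ :=
  (γ - 1) * (U.2.2 - U.2.1 ^ 2 / (2 * U.1))

/-- Velocity of a 1D Euler state: `v = m/ρ`. -/
noncomputable def eulerVelocity (U : ℝ × ℝ × ℝ) : ℝ := U.2.1 / U.1

/-- Sound speed of a 1D Euler state: `c = √(γp/ρ)`. -/
noncomputable def eulerSoundSpeed (γ : ℝ) (U : ℝ × ℝ × ℝ) : ℝ :=
  Real.sqrt (γ * eulerPressure γ U / U.1)

/-- Flux of the 1D compressible Euler equations:
`F(U) = (m, m²/ρ + p, v(E + p))`. -/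
noncomputable def eulerFlux (γ : ℝ) (U : ℝ × ℝ × ℝ) : ℝ × ℝ × ℝ :=
  (U.2.1, U.2.1 ^ 2 / U.1 + eulerPressure γ U,
    eulerVelocity U * (U.2.2 + eulerPressure γ U))

/-- Invariant domain of the Euler equations: positive density and pressure. -/
noncomputable def eulerInvariantDomain (γ : ℝ) : Set (ℝ × ℝ × ℝ) :=
  {U | 0 < U.1 ∧ 0 < eulerPressure γ U}

/-- Local Lax–Friedrichs numerical flux for the Euler equations:
`F̂(A,B) = (F(A)+F(B))/2 − (α/2)(B−A)`. -/
noncomputable def eulerLLF (γ α : ℝ) (A B : ℝ × ℝ × ℝ) : ℝ × ℝ × ℝ :=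
  (1 / 2 : ℝ) • (eulerFlux γ A + eulerFlux γ B) - (α / 2) • (B - A)

lemma two_mul_mul_eulerPressure (γ : ℝ) (U : ℝ × ℝ × ℝ) (hρ : U.1 ≠ 0) :
    2 * U.1 * eulerPressure γ U = (γ - 1) * (2 * U.1 * U.2.2 - U.2.1 ^ 2) := by
  unfold eulerPressure
  field_simp

lemma mem_eulerInvariantDomain_iff {γ : ℝ} (hγ : 1 < γ) {U : ℝ × ℝ × ℝ} :
    U ∈ eulerInvariantDomain γ ↔ 0 < U.1 ∧ U.2.1 ^ 2 < 2 * U.1 * U.2.2 := by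
  refine and_congr_right fun hρ => ?_
  rw [← mul_pos_iff_of_pos_left (by positivity : 0 < 2 * U.1),
    two_mul_mul_eulerPressure γ U hρ.ne', mul_pos_iff_of_pos_left (sub_pos.2 hγ), sub_pos]

lemma convex_eulerInvariantDomain {γ : ℝ} (hγ : 1 < γ) :
    Convex ℝ (eulerInvariantDomain γ) := by
  intro A hA B hB a b ha hb hab
  rw [mem_eulerInvariantDomain_iff hγ] at hA hB ⊢
  obtain ⟨ρ₁, m₁, E₁⟩ := A
  obtain ⟨ρ₂, m₂, E₂⟩ := B
  obtain ⟨hρ₁, hm₁⟩ := hA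
  obtain ⟨hρ₂, hm₂⟩ := hB
  simp only [Prod.smul_mk, Prod.mk_add_mk, smul_eq_mul] at *
  have hE₁ : 0 < E₁ := by nlinarith [sq_nonneg m₁]
  have hE₂ : 0 < E₂ := by nlinarith [sq_nonneg m₂]
  -- `|m₁ m₂| < 2 √(ρ₁E₁ ρ₂E₂) ≤ ρ₁E₂ + ρ₂E₁` by AM-GM
  have hcross : m₁ * m₂ ≤ ρ₁ * E₂ + ρ₂ * E₁ := by
    have : (m₁ * m₂) ^ 2 ≤ (ρ₁ * E₂ + ρ₂ * E₁) ^ 2 := by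
      nlinarith [sq_nonneg (ρ₁ * E₂ - ρ₂ * E₁),
        mul_le_mul hm₁.le hm₂.le (sq_nonneg _) (by positivity)]
    exact abs_le_of_sq_le_sq' this (by positivity) |>.2
  rcases ha.eq_or_lt with rfl | ha
  · simp_all
  refine ⟨by positivity, ?_⟩
  nlinarith [mul_nonneg (mul_nonneg ha.le hb) (sub_nonneg.2 hcross),
    mul_pos (mul_pos ha ha) (sub_pos.2 hm₁), mul_nonneg (mul_nonneg hb hb) (sub_nonneg.2 hm₂.le)]

lemma eulerSoundSpeed_sq {γ : ℝ} {U : ℝ × ℝ × ℝ} (hγ : 0 ≤ γ)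
    (hU : U ∈ eulerInvariantDomain γ) :
    eulerSoundSpeed γ U ^ 2 = γ * eulerPressure γ U / U.1 :=
  Real.sq_sqrt (div_nonneg (mul_nonneg hγ hU.2.le) hU.1.le)

lemma eulerSoundSpeed_pos {γ : ℝ} {U : ℝ × ℝ × ℝ} (hγ : 0 < γ)
    (hU : U ∈ eulerInvariantDomain γ) :
    0 < eulerSoundSpeed γ U :=
  Real.sqrt_pos.2 (div_pos (mul_pos hγ hU.2) hU.1)

lemma add_smul_eulerFlux_mem_eulerInvariantDomain {γ t : ℝ} (hγ : 1 < γ) {U : ℝ × ℝ × ℝ}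
    (hU : U ∈ eulerInvariantDomain γ)
    (ht : |t| * (|eulerVelocity U| + eulerSoundSpeed γ U) ≤ 1) :
    U + t • eulerFlux γ U ∈ eulerInvariantDomain γ := by
  rcases eq_or_ne t 0 with rfl | ht₀
  · simpa using hU
  have hc := eulerSoundSpeed_pos (by linarith) hU
  have hc_sq := eulerSoundSpeed_sq (by linarith) hU
  have hpρ := two_mul_mul_eulerPressure γ U hU.1.ne'
  obtain ⟨ρ, m, E⟩ := U
  obtain ⟨hρ, hp⟩ := hU
  simp only [eulerFlux, eulerVelocity] at *
  set v := m / ρ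
  set p := eulerPressure γ (ρ, m, E)
  set c := eulerSoundSpeed γ (ρ, m, E)
  have hm : m = ρ * v := by simp only [v]; field_simp
  have htc : |t| * c ≤ 1 + t * v := by
    nlinarith [neg_abs_le (t * v), abs_mul t v]
  have hw : 0 < 1 + t * v := lt_of_lt_of_le (by positivity) htc
  have hw_sq : t ^ 2 * (γ * p / ρ) ≤ (1 + t * v) ^ 2 := by
    rw [← hc_sq, ← sq_abs t, ← mul_pow]
    exact pow_le_pow_left₀ (by positivity) htc 2
  rw [mem_eulerInvariantDomain_iff hγ]
  simp only [Prod.smul_mk, Prod.mk_add_mk, smul_eq_mul]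
  refine ⟨by rw [hm]; nlinarith, ?_⟩
  have key : 2 * (ρ + t * m) * (E + t * (v * (E + p))) - (m + t * (m ^ 2 / ρ + p)) ^ 2
      = (1 + t * v) ^ 2 * (2 * ρ * E - m ^ 2) - t ^ 2 * p ^ 2 := by
    rw [hm]; field_simp; ring
  rw [← sub_pos, key]
  have hγ₁ : 0 < γ - 1 := sub_pos.2 hγ
  have htp : 0 < t ^ 2 * p ^ 2 := by positivity
  have hscaled : (γ - 1) * (t ^ 2 * p ^ 2) < (γ - 1) * ((1 + t * v) ^ 2 * (2 * ρ * E - m ^ 2)) :=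
    calc (γ - 1) * (t ^ 2 * p ^ 2) < 2 * ρ * p * (t ^ 2 * (γ * p / ρ)) := by
          field_simp; nlinarith
      _ ≤ 2 * ρ * p * (1 + t * v) ^ 2 := by gcongr
      _ = (γ - 1) * ((1 + t * v) ^ 2 * (2 * ρ * E - m ^ 2)) := by rw [hpρ]; ring
  exact sub_pos.2 (lt_of_mul_lt_mul_left hscaled hγ₁.le)

lemma sub_smul_eulerLLF_sub_eq (γ : ℝ) {α : ℝ} (hα : α ≠ 0) (μ : ℝ) (U₁ U₂ U₃ : ℝ × ℝ × ℝ) :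
    U₂ - μ • (eulerLLF γ α U₂ U₃ - eulerLLF γ α U₁ U₂) =
      (1 - μ * α) • U₂ + (μ * α) • ((1 / 2 : ℝ) • (U₁ + α⁻¹ • eulerFlux γ U₁)
        + (1 / 2 : ℝ) • (U₃ + (-α⁻¹) • eulerFlux γ U₃)) := by
  simp only [eulerLLF, smul_add, smul_smul, smul_sub]
  match_scalars <;> field_simp <;> ring

/-- **IDP property of the local Lax–Friedrichs flux for the 1D compressible Euler
equations.** If `U₁, U₂, U₃` have positive density and pressure,
`α ≥ max{|v| + c}` over the three states, and `μα ≤ 1` with `μ ≥ 0`, then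
`U₂ − μ(F̂(U₂,U₃) − F̂(U₁,U₂))` has positive density and pressure. -/
theorem euler_llf_flux_idp
    (γ : ℝ) (hγ : 1 < γ) (U₁ U₂ U₃ : ℝ × ℝ × ℝ)
    (h₁ : U₁ ∈ eulerInvariantDomain γ) (h₂ : U₂ ∈ eulerInvariantDomain γ)
    (h₃ : U₃ ∈ eulerInvariantDomain γ)
    (α : ℝ)
    (hα : α ≥ max (max (|eulerVelocity U₁| + eulerSoundSpeed γ U₁)
        (|eulerVelocity U₂| + eulerSoundSpeed γ U₂))
      (|eulerVelocity U₃| + eulerSoundSpeed γ U₃))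
    (μ : ℝ) (hμ : 0 ≤ μ) (hCFL : μ * α ≤ 1) :
    U₂ - μ • (eulerLLF γ α U₂ U₃ - eulerLLF γ α U₁ U₂) ∈ eulerInvariantDomain γ := by
  simp only [ge_iff_le, max_le_iff] at hα
  obtain ⟨⟨hα₁, hα₂⟩, hα₃⟩ := hα
  have hα_pos : 0 < α := calc
    0 < eulerSoundSpeed γ U₂ := eulerSoundSpeed_pos (by linarith) h₂
    _ ≤ |eulerVelocity U₂| + eulerSoundSpeed γ U₂ := le_add_of_nonneg_left (abs_nonneg _)
    _ ≤ α := hα₂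
  have hsplit {t : ℝ} {U : ℝ × ℝ × ℝ} (ht : |t| = α⁻¹) (hU : U ∈ eulerInvariantDomain γ)
      (hUα : |eulerVelocity U| + eulerSoundSpeed γ U ≤ α) :
      U + t • eulerFlux γ U ∈ eulerInvariantDomain γ :=
    add_smul_eulerFlux_mem_eulerInvariantDomain hγ hU <| by
      rwa [ht, inv_mul_le_iff₀ hα_pos, mul_one]
  have hα_inv : |α⁻¹| = α⁻¹ := abs_of_pos (inv_pos.2 hα_pos)
  have hconv := convex_eulerInvariantDomain hγ
  rw [sub_smul_eulerLLF_sub_eq γ hα_pos.ne']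
  refine hconv h₂ ?_ (by linarith) (by positivity) (by ring)
  exact hconv (hsplit hα_inv h₁ hα₁) (hsplit (by rwa [abs_neg]) h₃ hα₃)
    (by norm_num) (by norm_num) (by norm_num)
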